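/- arXiv:2509.16448 — 10 statements merged into one kernel-verified Lean document; each statement's English description precedes it below -/
import Mathlib

section
/- For every integer n ≥ 2, the domination number of the 2-token graph of the star graph satisfies γ(F_2(S_n)) = n − 1. -/
/-!
A dominating set `D` of `F₂(Sₙ)` must contain every pair `{i, j}` of leaves whose spokes
`{0, i}` and `{0, j}` both lie outside `D`, since those spokes are the only neighbours of the
pair. Hence if `ℓ` spokes are missing from `D`, then `|D| ≥ (n - ℓ) + C(ℓ, 2) ≥ n - 1`.
Conversely, for two leaves `a ≠ b`, the pair `{a, b}` together with the `n - 2` spokes `{0, i}`,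
`i ∉ {a, b}`, dominates: `{a, b}` is adjacent to `{0, a}` and `{0, b}`, and a pair of leaves
`{x, y}` with `x ∉ {a, b}` is adjacent to the spoke `{0, x}`.
-/

/-- The `k`-token graph of a simple graph `G`: vertices are the `k`-element
subsets of `V(G)`, and two subsets are adjacent when their symmetric difference
is a pair `{u, v}` of adjacent vertices of `G`. -/
def tokenGraph {V : Type*} [DecidableEq V] (G : SimpleGraph V) (k : ℕ) :
    SimpleGraph {A : Finset V // A.card = k} where
  Adj A B := ∃ u v : V, G.Adj u v ∧ symmDiff A.1 B.1 = {u, v}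
  symm := by
    constructor
    rintro A B ⟨u, v, huv, h⟩
    exact ⟨u, v, huv, by rwa [symmDiff_comm]⟩
  loopless := by
    constructor
    rintro A ⟨u, v, huv, h⟩
    rw [symmDiff_self] at h
    have : u ∈ (⊥ : Finset V) := h ▸ Finset.mem_insert_self u {v}
    simp at this

/-- A dominating set: every vertex is in `D` or adjacent to a vertex of `D`. -/
def IsDominatingSet {V : Type*} (G : SimpleGraph V) (D : Set V) : Prop :=
  ∀ v : V, v ∈ D ∨ ∃ u ∈ D, G.Adj u v

/-- The domination number: minimum cardinality of a dominating set. -/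
noncomputable def dominationNumber {V : Type*} [Fintype V] (G : SimpleGraph V) : ℕ :=
  sInf {m : ℕ | ∃ D : Finset V, IsDominatingSet G ↑D ∧ D.card = m}

/-- The star graph `S n` with vertex set `{0, 1, …, n}`, center `0` adjacent to
each leaf `1, …, n`. -/
def starGraph (n : ℕ) : SimpleGraph (Fin (n + 1)) where
  Adj u v := u ≠ v ∧ (u = 0 ∨ v = 0)
  symm := by constructor; rintro u v ⟨h1, h2⟩; exact ⟨h1.symm, h2.symm⟩
  loopless := by constructor; rintro u ⟨h1, _⟩; exact h1 rfl

open Finset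

namespace Finset

variable {α : Type*} [DecidableEq α]

lemma exists_eq_pair_of_mem {s : Finset α} {x : α} (hs : #s = 2) (hx : x ∈ s) :
    ∃ y, x ≠ y ∧ s = {x, y} := by
  obtain ⟨y, hy⟩ := card_eq_one.mp (by rw [card_erase_of_mem hx, hs] : #(s.erase x) = 1)
  refine ⟨y, fun hxy => ?_, by rw [← hy, insert_erase hx]⟩
  simpa [hxy] using hy.ge (mem_singleton_self y)

lemma injOn_pair (a : α) : Set.InjOn (fun i => ({a, i} : Finset α)) {i | i ≠ a} := by
  intro i hi j _ hij
  have : i ∈ ({a, j} : Finset α) := by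
    rw [← show ({a, i} : Finset α) = {a, j} from hij]; simp
  simpa [show i ≠ a from hi] using this

lemma symmDiff_insert_insert {x z : α} {C : Finset α} (hx : x ∉ C) (hz : z ∉ C) (hxz : x ≠ z) :
    symmDiff (insert x C) (insert z C) = {x, z} := by
  ext w
  simp only [mem_symmDiff, mem_insert, mem_singleton]
  grind

end Finset

lemma Nat.sub_one_le_choose_two : ∀ l : ℕ, l - 1 ≤ l.choose 2
  | 0 => le_refl 0
  | l + 1 => by rw [Nat.choose_succ_succ, Nat.choose_one_right]; omega

lemma tokenGraph_adj_of_insert {V : Type*} [DecidableEq V] {G : SimpleGraph V} {k : ℕ}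
    {A B : {A : Finset V // A.card = k}} {x z : V} (C : Finset V) (hA : A.1 = insert x C)
    (hB : B.1 = insert z C) (hx : x ∉ C) (hz : z ∉ C) (hxz : G.Adj x z) :
    (tokenGraph G k).Adj A B :=
  ⟨x, z, hxz, by rw [hA, hB, symmDiff_insert_insert hx hz hxz.ne]⟩

section Domination

variable {V : Type*} [Fintype V] {G : SimpleGraph V}

lemma dominationNumber_le_card {D : Finset V} (hD : IsDominatingSet G D) :
    dominationNumber G ≤ #D :=
  Nat.sInf_le ⟨D, hD, rfl⟩

lemma le_dominationNumber {m : ℕ} (h : ∀ D : Finset V, IsDominatingSet G D → m ≤ #D) :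
    m ≤ dominationNumber G :=
  le_csInf ⟨_, univ, fun v => Or.inl (by simp), rfl⟩ (by rintro _ ⟨D, hD, rfl⟩; exact h D hD)

end Domination

namespace starGraph

variable {n : ℕ}

lemma adj_zero {i : Fin (n + 1)} (hi : i ≠ 0) : (starGraph n).Adj 0 i :=
  ⟨hi.symm, Or.inl rfl⟩

lemma exists_eq_pair_zero_of_tokenGraph_adj {A B : {A : Finset (Fin (n + 1)) // #A = 2}}
    (h : (tokenGraph (starGraph n) 2).Adj A B) (h0 : 0 ∉ B.1) : ∃ i ∈ B.1, A.1 = {0, i} := by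
  obtain ⟨u, v, ⟨huv, huv0⟩, hAB⟩ := h
  obtain ⟨w, hw, hAB⟩ : ∃ w, w ≠ 0 ∧ symmDiff A.1 B.1 = {0, w} := by
    rcases huv0 with rfl | rfl
    · exact ⟨v, huv.symm, hAB⟩
    · exact ⟨u, huv, by rw [hAB, pair_comm]⟩
  have h0A : 0 ∈ A.1 := by
    have : 0 ∈ symmDiff A.1 B.1 := hAB ▸ mem_insert_self 0 {w}
    exact ((mem_symmDiff.mp this).resolve_right fun h => h0 h.1).1
  obtain ⟨c, hc, hA⟩ := exists_eq_pair_of_mem A.2 h0A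
  refine ⟨c, by_contra fun hcB => ?_, hA⟩
  -- otherwise `A ∆ B = {0, c} = A`, which forces `B = ∅`
  have hcw : c = w := by
    have : c ∈ symmDiff A.1 B.1 := mem_symmDiff.mpr (Or.inl ⟨by simp [hA], hcB⟩)
    simpa [hAB, hc.symm] using this
  have hB : B.1 = ∅ := symmDiff_eq_left.mp (by rw [hAB, hA, hcw])
  simpa [hB] using B.2

lemma mem_of_isDominatingSet_of_zero_notMem {D : Finset {A : Finset (Fin (n + 1)) // #A = 2}}
    (hD : IsDominatingSet (tokenGraph (starGraph n) 2) D)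
    {s : {A : Finset (Fin (n + 1)) // #A = 2}} (h0 : 0 ∉ s.1)
    (hs : ∀ i ∈ s.1, {0, i} ∉ D.image Subtype.val) : s ∈ D := by
  refine (hD s).resolve_right ?_
  rintro ⟨A, hAD, hAs⟩
  obtain ⟨i, hi, hA⟩ := exists_eq_pair_zero_of_tokenGraph_adj hAs h0
  exact hs i hi (hA ▸ mem_image_of_mem _ hAD)

lemma sub_one_le_card_of_isDominatingSet {D : Finset {A : Finset (Fin (n + 1)) // #A = 2}}
    (hD : IsDominatingSet (tokenGraph (starGraph n) 2) D) : n - 1 ≤ #D := by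
  set D' := D.image Subtype.val
  set P := (univ.erase 0).filter fun i => {0, i} ∈ D'
  set L := (univ.erase 0).filter fun i => {0, i} ∉ D'
  have hPL : #P + #L = n := by rw [card_filter_add_card_filter_not]; simp
  have hP : P.image (fun i => {0, i}) ⊆ D' := by
    intro s hs
    obtain ⟨i, hi, rfl⟩ := mem_image.mp hs
    exact (mem_filter.mp hi).2
  have hL : L.powersetCard 2 ⊆ D' := by
    intro s hs
    obtain ⟨hsL, hs2⟩ := mem_powersetCard.mp hs
    refine mem_image_of_mem Subtype.val (s := D) (a := ⟨s, hs2⟩) ?_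
    refine mem_of_isDominatingSet_of_zero_notMem hD (fun h => ?_)
      fun i hi => (mem_filter.mp (hsL hi)).2
    simpa using (mem_filter.mp (hsL h)).1
  have hdisj : Disjoint (P.image fun i => {0, i}) (L.powersetCard 2) := by
    refine disjoint_left.mpr fun s hsP hsL => ?_
    obtain ⟨i, -, rfl⟩ := mem_image.mp hsP
    simpa using (mem_filter.mp ((mem_powersetCard.mp hsL).1 (mem_insert_self 0 {i}))).1
  have hinj : Set.InjOn (fun i => ({0, i} : Finset (Fin (n + 1)))) P :=
    (injOn_pair 0).mono fun i hi => (mem_erase.mp (mem_filter.mp hi).1).1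
  have hcount : #P + (#L).choose 2 ≤ #D :=
    calc #P + (#L).choose 2 = #(P.image (fun i => {0, i}) ∪ L.powersetCard 2) := by
          rw [card_union_of_disjoint hdisj, card_image_of_injOn hinj, card_powersetCard]
      _ ≤ #D' := card_le_card (union_subset hP hL)
      _ ≤ #D := card_image_le
  have := Nat.sub_one_le_choose_two #L
  omega

def spokesAndPair (a b : Fin (n + 1)) : Finset {A : Finset (Fin (n + 1)) // #A = 2} :=
  (insert {a, b} ((univ \ {0, a, b}).image fun i => {0, i})).subtype (#· = 2)

variable {a b : Fin (n + 1)}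

lemma card_spokesAndPair (ha : a ≠ 0) (hb : b ≠ 0) (hab : a ≠ b) :
    #(spokesAndPair a b) = n - 1 := by
  have hspokes :
      #((univ \ {0, a, b}).image fun i => ({0, i} : Finset (Fin (n + 1)))) = n - 2 := by
    rw [card_image_of_injOn ((injOn_pair 0).mono fun i hi => by simp_all),
      card_sdiff_of_subset (subset_univ _), card_univ, Fintype.card_fin,
      card_insert_of_notMem (by simp [ha.symm, hb.symm]), card_pair hab]
    omega
  have hnotMem : {a, b} ∉ (univ \ {0, a, b}).image fun i => ({0, i} : Finset (Fin (n + 1))) := by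
    simp only [mem_image, not_exists, not_and]
    intro i _ hi
    have : 0 ∈ ({a, b} : Finset (Fin (n + 1))) := hi ▸ mem_insert_self 0 {i}
    simp [ha.symm, hb.symm] at this
  rw [spokesAndPair, card_subtype, filter_true_of_mem, card_insert_of_notMem hnotMem, hspokes]
  · -- `omega` reads `2 ≤ n` off the three distinct elements `0, a, b` of `Fin (n + 1)`
    omega
  · simp only [mem_insert, mem_image]
    rintro s (rfl | ⟨i, hi, rfl⟩)
    · exact card_pair hab
    · exact card_pair fun h => (mem_sdiff.mp hi).2 (by simp [h])

lemma isDominatingSet_spokesAndPair (ha : a ≠ 0) (hb : b ≠ 0) (hab : a ≠ b) :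
    IsDominatingSet (tokenGraph (starGraph n) 2) (spokesAndPair a b) := by
  have hmem {X : {A : Finset (Fin (n + 1)) // #A = 2}} :
      X ∈ spokesAndPair a b ↔ X.1 = {a, b} ∨ ∃ i ∉ ({0, a, b} : Finset _), X.1 = {0, i} := by
    simp [spokesAndPair, eq_comm]
  let pairAB : {A : Finset (Fin (n + 1)) // #A = 2} := ⟨{a, b}, card_pair hab⟩
  intro X
  by_cases h0 : 0 ∈ X.1
  · obtain ⟨c, hc, hX⟩ := exists_eq_pair_of_mem X.2 h0
    by_cases hcab : c = a ∨ c = b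
    · refine Or.inr ⟨pairAB, hmem.mpr (Or.inl rfl), ?_⟩
      rcases hcab with rfl | rfl
      · exact tokenGraph_adj_of_insert {c} (pair_comm c b) hX (by simpa using hab.symm)
          (by simpa using hc) (adj_zero hb).symm
      · exact tokenGraph_adj_of_insert {c} rfl hX (by simpa using hab)
          (by simpa using hc) (adj_zero ha).symm
    · exact Or.inl (hmem.mpr (Or.inr ⟨c, by simp_all [eq_comm], hX⟩))
  · by_cases hXab : X.1 = {a, b}
    · exact Or.inl (hmem.mpr (Or.inl hXab))
    obtain ⟨x, hxX, hxab⟩ := not_subset.mp fun h =>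
      hXab (eq_of_subset_of_card_le h (by rw [X.2, card_pair hab]))
    obtain ⟨y, hxy, hXxy⟩ := exists_eq_pair_of_mem X.2 hxX
    have hx0 : x ≠ 0 := fun h => h0 (h ▸ hxX)
    have hy0 : y ≠ 0 := fun h => h0 (h ▸ hXxy ▸ by simp)
    refine Or.inr ⟨⟨{0, x}, card_pair hx0.symm⟩, hmem.mpr (Or.inr ⟨x, by simp_all, rfl⟩), ?_⟩
    exact tokenGraph_adj_of_insert {x} rfl (hXxy.trans (pair_comm x y))
      (by simpa using hx0.symm) (by simpa using hxy.symm) (adj_zero hy0)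

end starGraph

/-- For every integer `n ≥ 2`, the domination number of the 2-token graph of
the star graph satisfies `γ(F₂(Sₙ)) = n - 1`. -/
theorem domination_two_token_star (n : ℕ) (hn : 2 ≤ n) :
    dominationNumber (tokenGraph (starGraph n) 2) = n - 1 := by
  have hleaves : 1 < #(univ.erase (0 : Fin (n + 1))) := by
    rw [card_erase_of_mem (mem_univ 0), card_univ, Fintype.card_fin]; omega
  obtain ⟨a, ha, b, hb, hab⟩ := one_lt_card.mp hleaves
  have ha0 := (mem_erase.mp ha).1
  have hb0 := (mem_erase.mp hb).1
  refine le_antisymm ?_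
    (le_dominationNumber fun _ => starGraph.sub_one_le_card_of_isDominatingSet)
  rw [← starGraph.card_spokesAndPair ha0 hb0 hab]
  exact dominationNumber_le_card (starGraph.isDominatingSet_spokesAndPair ha0 hb0 hab)
end

section
/- Let n ≥ 2 and let X be any set of vertices of the 2-token graph F_2(S_n) with |X| = n − 2. Then there exists a 2-element subset B of {1,…,n} (i.e., a vertex of F_2(S_n) not containing 0) such that B ∉ X and B is not adjacent in F_2(S_n) to any vertex of X. In particular, X is not a dominating set of F_2(S_n). -/
/-!
A vertex of `F₂(Sₙ)` avoiding the centre is only adjacent to vertices `{0, a}` with `a` one of its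
own leaves. The `k` members of `X` through `0` pair the centre with at most `k` leaves, leaving at
least `n - k = r + 2` free leaves, where `r` counts the members of `X` avoiding `0`. The free leaves
span at least `(r + 2).choose 2 > r` pairs, so one of them lies outside `X`, and it is neither in
`X` nor adjacent to a member of `X`.
-/

open Finset

lemma succ_le_choose_two_add_two (r : ℕ) : r + 1 ≤ (r + 2).choose 2 := by
  rw [Nat.choose_succ_succ', Nat.choose_one_right]
  exact Nat.le_add_right _ _

lemma exists_pair_subset_notMem {α : Type*} [DecidableEq α] {T : Finset α}
    {Y : Finset (Finset α)} (h : #Y + 2 ≤ #T) : ∃ B ⊆ T, #B = 2 ∧ B ∉ Y := by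
  have hlt : #Y < #(T.powersetCard 2) := by
    rw [card_powersetCard]
    calc #Y < (#Y + 2).choose 2 := succ_le_choose_two_add_two _
      _ ≤ (#T).choose 2 := Nat.choose_le_choose 2 h
  obtain ⟨B, hB, hBY⟩ := exists_mem_notMem_of_card_lt_card hlt
  obtain ⟨hBT, hBcard⟩ := mem_powersetCard.mp hB
  exact ⟨B, hBT, hBcard, hBY⟩

section StarTokenGraph

variable {n k : ℕ}

def centrePartners (X : Finset {A : Finset (Fin (n + 1)) // #A = k}) : Finset (Fin (n + 1)) :=
  (X.filter fun A => 0 ∈ A.1).biUnion fun A => A.1.erase 0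

lemma card_centrePartners_le (X : Finset {A : Finset (Fin (n + 1)) // #A = k}) :
    #(centrePartners X) ≤ #(X.filter fun A => 0 ∈ A.1) * (k - 1) :=
  card_biUnion_le_card_mul _ _ _ fun A hA => by
    rw [card_erase_of_mem (mem_filter.mp hA).2, A.2]

lemma erase_zero_subset_of_tokenGraph_starGraph_adj {A B : {A : Finset (Fin (n + 1)) // #A = k}}
    (hAB : (tokenGraph (starGraph n) k).Adj A B) (hB : 0 ∉ B.1) :
    0 ∈ A.1 ∧ A.1.erase 0 ⊆ B.1 := by
  obtain ⟨u, v, ⟨huv, hcentre⟩, hsd⟩ := hAB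
  have h0 : 0 ∈ A.1 \ B.1 := by
    have : (0 : Fin (n + 1)) ∈ symmDiff A.1 B.1 := by
      rw [hsd]; rcases hcentre with rfl | rfl <;> simp
    rcases mem_symmDiff.mp this with h | ⟨h, -⟩
    · exact mem_sdiff.mpr h
    · exact absurd h hB
  -- `A \ B` and `B \ A` have equal size and together make up the edge `{u, v}`.
  have hcard : #(A.1 \ B.1) ≤ 1 := by
    have hsum : #(A.1 \ B.1) + #(B.1 \ A.1) = 2 := by
      rw [← card_union_of_disjoint disjoint_sdiff_sdiff, ← Finset.symmDiff_def, hsd,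
        card_pair huv]
    have := card_sdiff_comm (A.2.trans B.2.symm)
    omega
  refine ⟨(mem_sdiff.mp h0).1, fun x hx => ?_⟩
  obtain ⟨hx0, hxA⟩ := mem_erase.mp hx
  by_contra hxB
  exact hx0 (card_le_one.mp hcard x (mem_sdiff.mpr ⟨hxA, hxB⟩) 0 h0)

lemma not_tokenGraph_starGraph_adj_of_disjoint_centrePartners
    {X : Finset {A : Finset (Fin (n + 1)) // #A = 2}} {A B : {A : Finset (Fin (n + 1)) // #A = 2}}
    (hA : A ∈ X) (hB : 0 ∉ B.1) (hBX : Disjoint B.1 (centrePartners X)) :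
    ¬ (tokenGraph (starGraph n) 2).Adj A B := by
  intro hAB
  obtain ⟨h0A, hsub⟩ := erase_zero_subset_of_tokenGraph_starGraph_adj hAB hB
  obtain ⟨a, ha⟩ := card_eq_one.mp (by rw [card_erase_of_mem h0A, A.2] : #(A.1.erase 0) = 1)
  have haB : a ∈ B.1 := hsub (ha ▸ mem_singleton_self a)
  have haX : a ∈ centrePartners X :=
    mem_biUnion.mpr ⟨A, mem_filter.mpr ⟨hA, h0A⟩, ha ▸ mem_singleton_self a⟩
  exact disjoint_left.mp hBX haB haX

end StarTokenGraph

lemma not_isDominatingSet_of_forall_not_adj {V : Type*} {G : SimpleGraph V} {D : Set V} {v : V}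
    (hv : v ∉ D) (hadj : ∀ u ∈ D, ¬ G.Adj u v) : ¬ IsDominatingSet G D := fun hD =>
  (hD v).elim hv fun ⟨u, hu, huv⟩ => hadj u hu huv

/-- Any set `X` of `n - 2` vertices of `F₂(Sₙ)` misses some vertex `B` not
containing `0` (neither in `X` nor adjacent to a vertex of `X`); in particular,
`X` is not a dominating set. -/
theorem small_set_not_dominating_star (n : ℕ) (hn : 2 ≤ n)
    (X : Finset {A : Finset (Fin (n + 1)) // A.card = 2}) (hX : X.card = n - 2) :
    (∃ B : {A : Finset (Fin (n + 1)) // A.card = 2}, (0 : Fin (n + 1)) ∉ B.1 ∧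
      B ∉ X ∧ ∀ A ∈ X, ¬ (tokenGraph (starGraph n) 2).Adj A B) ∧
    ¬ IsDominatingSet (tokenGraph (starGraph n) 2) ↑X := by
  have hsplit := card_filter_add_card_filter_not (s := X) fun A => 0 ∈ A.1
  have hpartners := card_centrePartners_le X
  have hfree := le_card_sdiff (centrePartners X) (univ.erase (0 : Fin (n + 1)))
  rw [card_erase_of_mem (mem_univ _), card_univ, Fintype.card_fin] at hfree
  obtain ⟨B, hBfree, hBcard, hBX⟩ :=
    exists_pair_subset_notMem (T := univ.erase 0 \ centrePartners X)
    (Y := (X.filter fun A => 0 ∉ A.1).image Subtype.val) (by grind [card_image_le])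
  have hB0 : 0 ∉ B := fun h => notMem_erase 0 univ (mem_sdiff.mp (hBfree h)).1
  have hBnotin : ⟨B, hBcard⟩ ∉ X := fun h =>
    hBX (mem_image.mpr ⟨⟨B, hBcard⟩, mem_filter.mpr ⟨h, hB0⟩, rfl⟩)
  have hnadj : ∀ A ∈ X, ¬ (tokenGraph (starGraph n) 2).Adj A ⟨B, hBcard⟩ := fun A hA =>
    not_tokenGraph_starGraph_adj_of_disjoint_centrePartners hA hB0
      (disjoint_of_subset_left hBfree sdiff_disjoint)
  exact ⟨⟨⟨B, hBcard⟩, hB0, hBnotin, hnadj⟩,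
    not_isDominatingSet_of_forall_not_adj (by simpa using hBnotin) (by simpa using hnadj)⟩
end

section
/- Let n and k be integers with 2 ≤ k and 2k ≤ n. Then the domination number of the k-token graph of the star graph satisfies γ(F_k(S_n)) > (1/k)·C(n, k−1), where C(n, k−1) denotes the binomial coefficient n choose k−1. -/
/-!
Split the `k`-sets of `{0, …, n}` according to whether they contain the centre `0`. A move in
`F_k(S_n)` carries a token from the centre to a leaf or back, so both classes are independent;
a set through `0` dominates no other set through `0`, and a set avoiding `0` dominates at most
`k` of them, one per token. The `C(n, k-1)` sets through `0` must all be dominated, so a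
dominating set with `a` members through `0` and `b` avoiding it has `C(n, k-1) ≤ a + k b`, which
is `< k (a + b)` once `a > 0`. If `a = 0`, independence forces all `C(n, k) ≥ C(n, k-1)` sets
avoiding `0` into the dominating set, and `k ≥ 2` makes the bound strict.
-/

open Finset

section Domination

variable {V : Type*} {G : SimpleGraph V}

theorem IsDominatingSet.subset_of_isIndepSet {D S : Set V} (hD : IsDominatingSet G D)
    (hS : G.IsIndepSet S) (hDS : D ⊆ S) : S ⊆ D := by
  intro v hv
  rcases hD v with hvD | ⟨u, huD, huv⟩
  · exact hvD
  · exact absurd huv (hS (hDS huD) hv huv.ne)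

theorem IsDominatingSet.card_le_sum_card_filter [DecidableEq V] [DecidableRel G.Adj]
    {D : Finset V} (hD : IsDominatingSet G D) (S : Finset V) :
    #S ≤ ∑ d ∈ D, #{v ∈ S | v = d ∨ G.Adj d v} := by
  refine (card_le_card fun v hv => ?_).trans card_biUnion_le
  rcases hD v with hvD | ⟨u, huD, huv⟩
  · exact mem_biUnion.2 ⟨v, hvD, mem_filter.2 ⟨hv, Or.inl rfl⟩⟩
  · exact mem_biUnion.2 ⟨u, huD, mem_filter.2 ⟨hv, Or.inr huv⟩⟩

theorem exists_isDominatingSet_card_eq_dominationNumber [Fintype V] (G : SimpleGraph V) :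
    ∃ D : Finset V, IsDominatingSet G D ∧ #D = dominationNumber G :=
  Nat.sInf_mem (s := {m | ∃ D : Finset V, IsDominatingSet G D ∧ #D = m})
    ⟨_, univ, fun v => Or.inl (by simp), rfl⟩

end Domination

section FinsetLen

variable {α : Type*} [Fintype α]

theorem card_filter_finsetLen (k : ℕ) (p : Finset α → Prop) [DecidablePred p] :
    #{A : {A : Finset α // #A = k} | p A.1} = #{A ∈ univ.powersetCard k | p A} := by
  rw [← card_map (Function.Embedding.subtype _)]
  congr 1
  ext A
  simp [and_comm]

variable [DecidableEq α]

theorem card_finsetLen_filter_mem {k : ℕ} (hk : 1 ≤ k) (a : α) :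
    #{A : {A : Finset α // #A = k} | a ∈ A.1} = (Fintype.card α - 1).choose (k - 1) := by
  rw [card_filter_finsetLen k (a ∈ ·)]
  simpa using card_filter_powersetCard_subset {a} univ k (by simp) (by simpa)

theorem card_finsetLen_filter_notMem (k : ℕ) (a : α) :
    #{A : {A : Finset α // #A = k} | a ∉ A.1} = (Fintype.card α - 1).choose k := by
  rw [card_filter_finsetLen k (a ∉ ·), ← card_univ, ← card_erase_of_mem (mem_univ a),
    ← card_powersetCard]
  congr 1
  ext A
  simp [subset_erase, and_comm]

end FinsetLen

theorem exists_eq_insert_erase_of_tokenGraph_adj {V : Type*} [DecidableEq V]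
    {G : SimpleGraph V} {k : ℕ} {A B : {A : Finset V // #A = k}} (h : (tokenGraph G k).Adj A B) :
    ∃ u ∈ A.1, ∃ v, G.Adj u v ∧ B.1 = insert v (A.1.erase u) := by
  obtain ⟨u, v, huv, hAB⟩ := h
  have hsdiff : #(A.1 \ B.1) = #(B.1 \ A.1) := card_sdiff_comm (A.2.trans B.2.symm)
  have htotal : #(A.1 \ B.1) + #(B.1 \ A.1) = 2 := by
    rw [← card_union_of_disjoint disjoint_sdiff_sdiff, ← sup_eq_union, ← symmDiff_def, hAB,
      card_pair huv.ne]
  obtain ⟨x, hx⟩ := card_eq_one.1 (show #(A.1 \ B.1) = 1 by omega)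
  obtain ⟨y, hy⟩ := card_eq_one.1 (show #(B.1 \ A.1) = 1 by omega)
  have hxA := Finset.ext_iff.1 hx
  have hyB := Finset.ext_iff.1 hy
  simp only [mem_sdiff, mem_singleton] at hxA hyB
  have hpair := Finset.ext_iff.1 hAB
  simp only [mem_symmDiff, mem_insert, mem_singleton] at hpair
  refine ⟨x, ((hxA x).2 rfl).1, y, ?_, ?_⟩
  · have hxy : x ≠ y := fun h => ((hxA x).2 rfl).2 (h ▸ ((hyB y).2 rfl).1)
    rcases (hpair x).1 (Or.inl ((hxA x).2 rfl)) with rfl | rfl <;>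
      rcases (hpair y).1 (Or.inr ((hyB y).2 rfl)) with rfl | rfl
    all_goals first | exact absurd rfl hxy | exact huv | exact huv.symm
  · ext z
    simp only [mem_insert, mem_erase]
    have := hxA z
    have := hyB z
    tauto

section StarGraph

open scoped Classical

variable {n k : ℕ}

theorem zero_mem_iff_zero_notMem_of_tokenGraph_starGraph_adj
    {A B : {A : Finset (Fin (n + 1)) // #A = k}} (h : (tokenGraph (starGraph n) k).Adj A B) :
    0 ∈ A.1 ↔ 0 ∉ B.1 := by
  obtain ⟨u, v, ⟨-, huv⟩, hAB⟩ := h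
  have h0 : (0 : Fin (n + 1)) ∈ symmDiff A.1 B.1 := by
    rw [hAB]
    rcases huv with rfl | rfl <;> simp
  rw [mem_symmDiff] at h0
  tauto

theorem isIndepSet_tokenGraph_starGraph_zero_notMem :
    (tokenGraph (starGraph n) k).IsIndepSet {A | 0 ∉ A.1} :=
  fun _ hA _ hB _ hAB => hA ((zero_mem_iff_zero_notMem_of_tokenGraph_starGraph_adj hAB).2 hB)

theorem card_closedNeighbor_zero_mem_le_one {d : {A : Finset (Fin (n + 1)) // #A = k}}
    (hd : 0 ∈ d.1) :
    #{A ∈ {A | 0 ∈ A.1} | A = d ∨ (tokenGraph (starGraph n) k).Adj d A} ≤ 1 := by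
  refine card_le_one.2 fun A hA B hB => ?_
  simp only [mem_filter, mem_univ, true_and] at hA hB
  have eq_d : ∀ C : {A : Finset (Fin (n + 1)) // #A = k},
      0 ∈ C.1 → (C = d ∨ (tokenGraph (starGraph n) k).Adj d C) → C = d := by
    rintro C hC (rfl | hdC)
    · rfl
    · exact absurd hC ((zero_mem_iff_zero_notMem_of_tokenGraph_starGraph_adj hdC).1 hd)
  rw [eq_d A hA.1 hA.2, eq_d B hB.1 hB.2]

theorem card_closedNeighbor_zero_mem_le_of_zero_notMem
    {d : {A : Finset (Fin (n + 1)) // #A = k}} (hd : 0 ∉ d.1) :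
    #{A ∈ {A | 0 ∈ A.1} | A = d ∨ (tokenGraph (starGraph n) k).Adj d A} ≤ k := by
  set S : Finset {A : Finset (Fin (n + 1)) // #A = k} :=
    {A ∈ {A | 0 ∈ A.1} | A = d ∨ (tokenGraph (starGraph n) k).Adj d A}
  calc #S = #(S.map (Function.Embedding.subtype _)) := (card_map _).symm
    _ ≤ #(d.1.image fun x => insert 0 (d.1.erase x)) := card_le_card ?_
    _ ≤ #d.1 := card_image_le
    _ = k := d.2
  intro A hA
  simp only [S, mem_map, mem_filter, mem_univ, true_and, Function.Embedding.coe_subtype] at hA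
  obtain ⟨A, ⟨hA0, rfl | hdA⟩, rfl⟩ := hA
  · exact absurd hA0 hd
  obtain ⟨u, hu, v, ⟨-, huv⟩, hA⟩ := exists_eq_insert_erase_of_tokenGraph_adj hdA
  obtain rfl : v = 0 := huv.resolve_left (ne_of_mem_of_not_mem hu hd)
  exact mem_image.2 ⟨u, hu, hA.symm⟩

theorem choose_lt_mul_card_of_isDominatingSet_tokenGraph_starGraph (hk : 2 ≤ k)
    (hkn : 2 * k ≤ n) {D : Finset {A : Finset (Fin (n + 1)) // #A = k}}
    (hD : IsDominatingSet (tokenGraph (starGraph n) k) D) :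
    n.choose (k - 1) < k * #D := by
  set a := #{d ∈ D | 0 ∈ d.1}
  set b := #{d ∈ D | 0 ∉ d.1}
  have hab : a + b = #D := card_filter_add_card_filter_not _
  have hcover : n.choose (k - 1) ≤ a + k * b :=
    calc n.choose (k - 1) = #{A : {A : Finset (Fin (n + 1)) // #A = k} | 0 ∈ A.1} := by
          rw [card_finsetLen_filter_mem (by omega)]; simp
      _ ≤ ∑ d ∈ D, #{A ∈ {A | 0 ∈ A.1} | A = d ∨ (tokenGraph (starGraph n) k).Adj d A} :=
          hD.card_le_sum_card_filter _
      _ ≤ ∑ d ∈ D, if 0 ∈ d.1 then 1 else k := sum_le_sum fun d _ => by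
          split_ifs with hd
          exacts [card_closedNeighbor_zero_mem_le_one hd,
            card_closedNeighbor_zero_mem_le_of_zero_notMem hd]
      _ = a + k * b := by simp [sum_ite, a, b, mul_comm]
  have hchoose : n.choose (k - 1) ≤ n.choose k := by
    simpa [Nat.sub_add_cancel (by omega : 1 ≤ k)] using
      Nat.choose_le_succ_of_lt_half_left (r := k - 1) (n := n) (by omega)
  rcases Nat.eq_zero_or_pos a with ha | ha
  · have hDU : (D : Set {A : Finset (Fin (n + 1)) // #A = k}) ⊆ {A | 0 ∉ A.1} :=
      fun d hd h0 => notMem_empty d ((card_eq_zero.1 ha) ▸ mem_filter.2 ⟨hd, h0⟩)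
    have hUD := hD.subset_of_isIndepSet isIndepSet_tokenGraph_starGraph_zero_notMem hDU
    have hU : n.choose k ≤ #D := by
      calc n.choose k = #{A : {A : Finset (Fin (n + 1)) // #A = k} | 0 ∉ A.1} := by
            rw [card_finsetLen_filter_notMem]; simp
        _ ≤ #D := card_le_card fun A hA => hUD (mem_filter.1 hA).2
    have hpos : 0 < n.choose k := Nat.choose_pos (by omega)
    nlinarith
  · nlinarith

end StarGraph

/-- For `2 ≤ k` and `2k ≤ n`, the domination number of `F_k(Sₙ)` satisfies
`γ(F_k(Sₙ)) > (1/k) · C(n, k-1)`. -/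
theorem domination_token_star_lower (n k : ℕ) (hk : 2 ≤ k) (hkn : 2 * k ≤ n) :
    (1 / k : ℚ) * (n.choose (k - 1)) < dominationNumber (tokenGraph (starGraph n) k) := by
  obtain ⟨D, hD, hcard⟩ :=
    exists_isDominatingSet_card_eq_dominationNumber (tokenGraph (starGraph n) k)
  have hlt : (n.choose (k - 1) : ℚ) < k * #D := by
    exact_mod_cast choose_lt_mul_card_of_isDominatingSet_tokenGraph_starGraph hk hkn hD
  rw [← hcard, one_div_mul_eq_div, div_lt_iff₀ (by positivity)]
  linarith
end

section
/- Let n, k be integers with 2 ≤ k ≤ n, and let p be a prime dividing k − 1. Let D_1 be the set of all k-element subsets B of {0,1,…,n} such that 0 ∈ B and ∑_{b ∈ B} b ≢ 1 (mod p). Then every k-element subset A of {1,…,n} (i.e., every vertex of F_k(S_n) not containing 0) is adjacent in the k-token graph F_k(S_n) to some vertex of D_1. -/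
/-!
Moving the token at some `a ∈ A` to the centre `0` gives a neighbour `B = A - a + 0` whose sum is
`∑ A - a`. If every such sum were `≡ 1 (mod p)`, summing over the `k ≡ 1 (mod p)` choices of `a`
would give `(k - 1) ∑ A ≡ k`, that is `0 ≡ 1 (mod p)`.
-/

open Finset

theorem Finset.exists_sum_sub_ne {ι R : Type*} [CommRing R] (s : Finset ι) (f : ι → R)
    (hs : (#s : R) = 1) {c : R} (hc : c ≠ 0) : ∃ a ∈ s, ∑ i ∈ s, f i - f a ≠ c := by
  by_contra! h
  apply hc
  calc c = #s • c := by rw [nsmul_eq_mul, hs, one_mul]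
    _ = ∑ a ∈ s, (∑ i ∈ s, f i - f a) := by rw [sum_congr rfl h, sum_const]
    _ = 0 := by rw [sum_sub_distrib, sum_const, nsmul_eq_mul, hs, one_mul, sub_self]

theorem Finset.symmDiff_insert_erase {α : Type*} [DecidableEq α] {s : Finset α} {a u : α}
    (ha : a ∈ s) (hu : u ∉ s) : symmDiff (insert u (s.erase a)) s = {u, a} := by
  ext x
  simp only [mem_symmDiff, mem_insert, mem_erase, mem_singleton]
  grind

theorem tokenGraph_exists_adj_insert_erase {V : Type*} [DecidableEq V] {G : SimpleGraph V}
    {k : ℕ} (A : {A : Finset V // #A = k}) {a u : V} (ha : a ∈ A.1) (hu : u ∉ A.1)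
    (hua : G.Adj u a) :
    ∃ B : {B : Finset V // #B = k}, B.1 = insert u (A.1.erase a) ∧ (tokenGraph G k).Adj B A := by
  have hcard : #(insert u (A.1.erase a)) = k := by
    rw [card_insert_of_notMem fun h ↦ hu (mem_of_mem_erase h), card_erase_add_one ha, A.2]
  exact ⟨⟨_, hcard⟩, rfl, u, a, hua, symmDiff_insert_erase ha hu⟩

theorem starGraph_adj_zero_left {n : ℕ} {a : Fin (n + 1)} : (starGraph n).Adj 0 a ↔ a ≠ 0 := by
  simp [starGraph, ne_comm]

theorem vertex_without_center_dominated_general (n k p : ℕ) (hk : 2 ≤ k)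
    (hp : p.Prime) (hpk : p ∣ k - 1)
    (A : {A : Finset (Fin (n + 1)) // A.card = k}) (hA : (0 : Fin (n + 1)) ∉ A.1) :
    ∃ B : {A : Finset (Fin (n + 1)) // A.card = k},
      ((0 : Fin (n + 1)) ∈ B.1 ∧ ¬ ((∑ b ∈ B.1, (b.val : ℤ)) ≡ 1 [ZMOD (p : ℤ)])) ∧
      (tokenGraph (starGraph n) k).Adj B A := by
  have := Fact.mk hp
  have hcard : (#A.1 : ZMod p) = 1 := by
    rw [A.2, ← Nat.cast_one, ZMod.natCast_eq_natCast_iff]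
    exact ((Nat.modEq_iff_dvd' (by omega)).mpr hpk).symm
  obtain ⟨a, ha, hne⟩ := A.1.exists_sum_sub_ne (fun b ↦ (b.val : ZMod p)) hcard one_ne_zero
  have ha0 : a ≠ 0 := fun h ↦ hA (h ▸ ha)
  obtain ⟨B, hB, hadj⟩ := tokenGraph_exists_adj_insert_erase A ha hA
    (starGraph_adj_zero_left.mpr ha0)
  refine ⟨B, ⟨hB ▸ mem_insert_self _ _, ?_⟩, hadj⟩
  rw [hB, ← ZMod.intCast_eq_intCast_iff]
  push_cast
  rwa [sum_insert fun h ↦ hA (mem_of_mem_erase h), sum_erase_eq_sub ha, Fin.val_zero,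
    Nat.cast_zero, zero_add]

/-- Let `p` be a prime dividing `k - 1`, and `D₁` the set of vertices `B` of
`F_k(Sₙ)` with `0 ∈ B` and `∑_{b ∈ B} b ≢ 1 (mod p)`. Then every vertex of
`F_k(Sₙ)` not containing `0` is adjacent to some vertex of `D₁`. -/
theorem vertex_without_center_dominated (n k p : ℕ) (hk : 2 ≤ k) (hkn : k ≤ n)
    (hp : p.Prime) (hpk : p ∣ k - 1)
    (A : {A : Finset (Fin (n + 1)) // A.card = k}) (hA : (0 : Fin (n + 1)) ∉ A.1) :
    ∃ B : {A : Finset (Fin (n + 1)) // A.card = k},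
      ((0 : Fin (n + 1)) ∈ B.1 ∧ ¬ ((∑ b ∈ B.1, (b.val : ℤ)) ≡ 1 [ZMOD (p : ℤ)])) ∧
      (tokenGraph (starGraph n) k).Adj B A :=
  vertex_without_center_dominated_general n k p hk hp hpk A hA
end

section
/- Let n, k be integers with 2 ≤ k ≤ n, let p be a prime, and let N denote the number of (k−1)-element subsets A of {1,…,n} with ∑_{a ∈ A} a ≡ 1 (mod p). Then (1/p − ((p−1)/p)·(k−1)/(n−k+1))·C(n, k−1) ≤ N ≤ (1/p + (k+p−1)/(n−k+1))·C(n, k−1), where C(n, k−1) denotes the binomial coefficient n choose k−1. -/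
/-!
Double count the pairs `(A, a)` with `a ∈ A`: `N · (k - 1)` is the sum, over the
`(k - 2)`-subsets `B` of `{1, …, n}`, of the number of `x ∉ B` with `x + ∑ B ≡ 1 (mod p)`.
Every residue class mod `p` has `⌊n / p⌋` or `⌊n / p⌋ + 1` elements in `{1, …, n}`, and `B` removes
at most `k - 2` of them, so each summand lies between `(n + 1) / p - (k - 1)` and `n / p + 1`.
Since `C(n, k - 2) · (n - k + 2) = C(n, k - 1) · (k - 1)`, this bounds `N · (n - k + 2)`, and the
stated bounds follow by rearranging.
-/

open Finset

theorem card_filter_range_add_modEq_mem_Icc {p : ℕ} (hp : 0 < p) (n c t : ℕ) :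
    #{x ∈ range n | x + c ≡ t [MOD p]} ∈ Set.Icc (n / p) (n / p + 1) := by
  obtain ⟨q, rfl⟩ : ∃ q, p = q + 1 := ⟨p - 1, by omega⟩
  have shift (x : ℕ) : x + c ≡ t [MOD q + 1] ↔ x ≡ t + q * c [MOD q + 1] := by
    constructor <;> intro h
    · have h' := h.add_right (q * c)
      rwa [show x + c + q * c = x + (q + 1) * c by ring, Nat.add_modulus_mul_modEq_iff] at h'
    · have h' := h.add_right c
      rwa [show t + q * c + c = t + (q + 1) * c by ring, Nat.modEq_add_modulus_mul_iff] at h'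
  simp_rw [shift, ← Nat.count_eq_card_filter_range, Nat.count_modEq_card _ hp]
  constructor <;> split_ifs <;> omega

theorem card_filter_Icc_one_add_modEq_mem_Icc {p : ℕ} (hp : 0 < p) (n c t : ℕ) :
    #{x ∈ Icc 1 n | x + c ≡ t [MOD p]} ∈ Set.Icc (n / p) (n / p + 1) := by
  have hIcc : Icc 1 n = (range n).map (addRightEmbedding 1) := by
    rw [range_eq_Ico, map_add_right_Ico, zero_add, Ico_add_one_right_eq_Icc]
  simpa only [hIcc, filter_map, card_map, Function.comp_def, addRightEmbedding_apply,
    add_assoc] using card_filter_range_add_modEq_mem_Icc hp n (1 + c) t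

theorem card_filter_le_card_filter_sdiff_add_card {α : Type*} [DecidableEq α]
    (s t : Finset α) (P : α → Prop) [DecidablePred P] :
    #{x ∈ s | P x} ≤ #{x ∈ s \ t | P x} + #t :=
  card_le_card_sdiff_add_card.trans <| Nat.add_le_add_right (card_le_card fun x hx => by
    simp only [mem_sdiff, mem_filter] at hx ⊢
    exact ⟨⟨hx.1.1, hx.2⟩, hx.1.2⟩) _

theorem card_filter_Icc_one_sdiff_add_modEq_bounds {p : ℕ} (hp : 0 < p) (n c t : ℕ)
    (B : Finset ℕ) :
    ((n + 1 : ℚ) / p - 1 - #B ≤ #{x ∈ Icc 1 n \ B | x + c ≡ t [MOD p]}) ∧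
      (#{x ∈ Icc 1 n \ B | x + c ≡ t [MOD p]} ≤ (n : ℚ) / p + 1) := by
  obtain ⟨hlo, hhi⟩ := card_filter_Icc_one_add_modEq_mem_Icc hp n c t
  have hsub := card_filter_le_card_filter_sdiff_add_card (Icc 1 n) B (· + c ≡ t [MOD p])
  have hmono : #{x ∈ Icc 1 n \ B | x + c ≡ t [MOD p]} ≤ #{x ∈ Icc 1 n | x + c ≡ t [MOD p]} :=
    card_le_card (filter_subset_filter _ sdiff_subset)
  have hpq : (0 : ℚ) < p := by exact_mod_cast hp
  have hdiv_lo : (n + 1 : ℚ) / p - 1 ≤ (n / p : ℕ) := by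
    rw [sub_le_iff_le_add, div_le_iff₀ hpq]
    have := Nat.lt_mul_div_succ n hp
    exact_mod_cast (show n + 1 ≤ (n / p + 1) * p by rw [mul_comm]; omega)
  have hdiv_hi : ((n / p : ℕ) : ℚ) ≤ n / p := Nat.cast_div_le
  constructor
  · have : ((n / p : ℕ) : ℚ) ≤ #{x ∈ Icc 1 n \ B | x + c ≡ t [MOD p]} + #B := by
      exact_mod_cast hlo.trans hsub
    linarith
  · have : (#{x ∈ Icc 1 n \ B | x + c ≡ t [MOD p]} : ℚ) ≤ (n / p : ℕ) + 1 := by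
      exact_mod_cast hmono.trans hhi
    linarith

theorem card_filter_powersetCard_succ_mul {α : Type*} [DecidableEq α] (s : Finset α) (m : ℕ)
    (P : Finset α → Prop) [DecidablePred P] :
    #{A ∈ s.powersetCard (m + 1) | P A} * (m + 1) =
      ∑ B ∈ s.powersetCard m, #{x ∈ s \ B | P (insert x B)} := by
  set T := {A ∈ s.powersetCard (m + 1) | P A}
  have hT : ∀ A ∈ T, #A = m + 1 := fun A hA => (mem_powersetCard.mp (mem_filter.mp hA).1).2
  calc #T * (m + 1) = #(T.sigma fun A => A) := by
        rw [card_sigma, sum_congr rfl hT, sum_const, smul_eq_mul]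
    _ = #((s.powersetCard m).sigma fun B => {x ∈ s \ B | P (insert x B)}) := by
        refine card_nbij' (fun a => ⟨a.1.erase a.2, a.2⟩) (fun b => ⟨insert b.2 b.1, b.2⟩)
          ?_ ?_ ?_ ?_
        · rintro ⟨A, a⟩ h
          simp only [T, coe_sigma, Set.mem_sigma_iff, mem_coe, mem_filter, mem_powersetCard,
            mem_sdiff] at h ⊢
          obtain ⟨⟨⟨hAs, hAcard⟩, hPA⟩, ha⟩ := h
          refine ⟨⟨(erase_subset a A).trans hAs, by rw [card_erase_of_mem ha, hAcard]; rfl⟩,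
            ⟨hAs ha, notMem_erase a A⟩, by rwa [insert_erase ha]⟩
        · rintro ⟨B, x⟩ h
          simp only [T, coe_sigma, Set.mem_sigma_iff, mem_coe, mem_filter, mem_powersetCard,
            mem_sdiff] at h ⊢
          obtain ⟨⟨hBs, hBcard⟩, ⟨hxs, hxB⟩, hP⟩ := h
          exact ⟨⟨⟨insert_subset hxs hBs, by rw [card_insert_of_notMem hxB, hBcard]⟩, hP⟩,
            mem_insert_self x B⟩
        · rintro ⟨A, a⟩ h
          simp [insert_erase (mem_sigma.mp (mem_coe.mp h)).2]
        · rintro ⟨B, x⟩ h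
          simp [erase_insert (mem_sdiff.mp (mem_filter.mp (mem_sigma.mp (mem_coe.mp h)).2).1).2]
    _ = ∑ B ∈ s.powersetCard m, #{x ∈ s \ B | P (insert x B)} := card_sigma _ _

theorem choose_mul_le_card_filter_sum_modEq_mul {p : ℕ} (hp : 0 < p) (n m t : ℕ) :
    (n.choose m : ℚ) * ((n + 1) / p - 1 - m) ≤
        #{A ∈ (Icc 1 n).powersetCard (m + 1) | ∑ a ∈ A, a ≡ t [MOD p]} * (m + 1) ∧
      (#{A ∈ (Icc 1 n).powersetCard (m + 1) | ∑ a ∈ A, a ≡ t [MOD p]} * (m + 1) : ℚ) ≤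
        n.choose m * (n / p + 1) := by
  have hcount : (#{A ∈ (Icc 1 n).powersetCard (m + 1) | ∑ a ∈ A, a ≡ t [MOD p]} * (m + 1) : ℚ) =
      ∑ B ∈ (Icc 1 n).powersetCard m, (#{x ∈ Icc 1 n \ B | x + ∑ b ∈ B, b ≡ t [MOD p]} : ℚ) := by
    rw [← Nat.cast_add_one, ← Nat.cast_mul, card_filter_powersetCard_succ_mul, Nat.cast_sum]
    refine sum_congr rfl fun B _ => congrArg (fun s => (#s : ℚ)) <| filter_congr fun x hx => ?_
    rw [sum_insert (mem_sdiff.mp hx).2]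
  have hbounds (B) (hB : B ∈ (Icc 1 n).powersetCard m) := by
    have h := card_filter_Icc_one_sdiff_add_modEq_bounds hp n (∑ b ∈ B, b) t B
    rwa [(mem_powersetCard.mp hB).2] at h
  have hcard : #((Icc 1 n).powersetCard m) = n.choose m := by simp
  rw [hcount]
  constructor
  · simpa only [hcard, nsmul_eq_mul] using card_nsmul_le_sum _ _ _ fun B hB => (hbounds B hB).1
  · simpa only [hcard, nsmul_eq_mul] using sum_le_card_nsmul _ _ _ fun B hB => (hbounds B hB).2

theorem choose_succ_mul_le_card_filter_sum_modEq_mul {p : ℕ} (hp : 0 < p) {n m : ℕ} (hmn : m ≤ n)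
    (t : ℕ) :
    (n.choose (m + 1) : ℚ) * ((n + 1) / p - 1 - m) ≤
        #{A ∈ (Icc 1 n).powersetCard (m + 1) | ∑ a ∈ A, a ≡ t [MOD p]} * (n - m) ∧
      (#{A ∈ (Icc 1 n).powersetCard (m + 1) | ∑ a ∈ A, a ≡ t [MOD p]} * (n - m) : ℚ) ≤
        n.choose (m + 1) * (n / p + 1) := by
  set N : ℚ := ((#{A ∈ (Icc 1 n).powersetCard (m + 1) | ∑ a ∈ A, a ≡ t [MOD p]} : ℕ) : ℚ)
  obtain ⟨hlo, hhi⟩ := choose_mul_le_card_filter_sum_modEq_mul hp n m t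
  have hchoose : (n.choose (m + 1) : ℚ) * (m + 1) = n.choose m * (n - m) := by
    rw [← Nat.cast_sub hmn]; exact_mod_cast Nat.choose_succ_right_eq n m
  have hm : (0 : ℚ) < m + 1 := by positivity
  have hnm : (0 : ℚ) ≤ n - m := by rw [sub_nonneg]; exact_mod_cast hmn
  constructor
  · refine le_of_mul_le_mul_right ?_ hm
    calc (n.choose (m + 1) : ℚ) * ((n + 1) / p - 1 - m) * (m + 1)
        = n.choose m * ((n + 1) / p - 1 - m) * (n - m) := by rw [mul_right_comm, hchoose]; ring
      _ ≤ N * (m + 1) * (n - m) := mul_le_mul_of_nonneg_right hlo hnm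
      _ = N * (n - m) * (m + 1) := by ring
  · refine le_of_mul_le_mul_right ?_ hm
    calc N * (n - m) * (m + 1) = N * (m + 1) * (n - m) := by ring
      _ ≤ n.choose m * (n / p + 1) * (n - m) := mul_le_mul_of_nonneg_right hhi hnm
      _ = n.choose (m + 1) * (n / p + 1) * (m + 1) := by rw [mul_right_comm, ← hchoose]; ring

section Rearrangement

variable {K : Type*} [Field K] [LinearOrder K] [IsStrictOrderedRing K] {n k p C N : K}

theorem one_div_sub_mul_le_of_le_mul (hp : 1 ≤ p) (hk : 1 ≤ k) (hkn : 0 < n - k + 1) (hC : 0 ≤ C)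
    (h : C * ((n + 1) / p - (k - 1)) ≤ N * (n - k + 2)) :
    (1 / p - (p - 1) / p * ((k - 1) / (n - k + 1))) * C ≤ N := by
  have hp0 : 0 < p := by linarith
  have gap : C * ((n + 1) / p - (k - 1)) -
      (1 / p - (p - 1) / p * ((k - 1) / (n - k + 1))) * C * (n - k + 2) =
        C * (k - 1) * (p - 1) / (p * (n - k + 1)) := by
    field_simp; ring
  have : 0 ≤ C * (k - 1) * (p - 1) / (p * (n - k + 1)) := by
    have := sub_nonneg.2 hk; have := sub_nonneg.2 hp; positivity
  exact le_of_mul_le_mul_right (by linarith) (by linarith : 0 < n - k + 2)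

theorem le_one_div_add_mul_of_mul_le (hp : 1 ≤ p) (hk : 1 ≤ k) (hkn : 0 < n - k + 1) (hC : 0 ≤ C)
    (h : N * (n - k + 2) ≤ C * (n / p + 1)) :
    N ≤ (1 / p + (k + p - 1) / (n - k + 1)) * C := by
  have hp0 : 0 < p := by linarith
  have gap : (1 / p + (k + p - 1) / (n - k + 1)) * C * (n - k + 2) - C * (n / p + 1)
      = C * ((n - k + 1) * (1 + (k - 1) * (p - 1) + p * (p - 1)) + p * (k - 1 + p)) /
          (p * (n - k + 1)) := by
    field_simp; ring
  have : 0 ≤ C * ((n - k + 1) * (1 + (k - 1) * (p - 1) + p * (p - 1)) + p * (k - 1 + p)) /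
      (p * (n - k + 1)) := by
    have := sub_nonneg.2 hk; have := sub_nonneg.2 hp; positivity
  exact le_of_mul_le_mul_right (by linarith) (by linarith : 0 < n - k + 2)

end Rearrangement

/-- Bounds on the number `N` of `(k-1)`-element subsets `A` of `{1, …, n}` with
`∑_{a ∈ A} a ≡ 1 (mod p)`:
`(1/p - ((p-1)/p)·(k-1)/(n-k+1))·C(n,k-1) ≤ N ≤ (1/p + (k+p-1)/(n-k+1))·C(n,k-1)`. -/
theorem count_subsets_sum_one_mod (n k p : ℕ) (hk : 2 ≤ k) (hkn : k ≤ n) (hp : p.Prime)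
    (N : ℕ)
    (hN : N = (((Finset.Icc 1 n).powersetCard (k - 1)).filter
      (fun A => (∑ a ∈ A, a) % p = 1 % p)).card) :
    ((1 : ℚ) / p - (((p : ℚ) - 1) / p) * (((k : ℚ) - 1) / ((n : ℚ) - k + 1)))
        * (n.choose (k - 1)) ≤ (N : ℚ) ∧
      (N : ℚ) ≤ ((1 : ℚ) / p + ((k : ℚ) + p - 1) / ((n : ℚ) - k + 1)) * (n.choose (k - 1)) := by
  obtain ⟨m, rfl⟩ : ∃ m, k = m + 2 := ⟨k - 2, by omega⟩
  obtain ⟨hlo, hhi⟩ := choose_succ_mul_le_card_filter_sum_modEq_mul hp.pos (by omega : m ≤ n) 1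
  rw [show #{A ∈ (Icc 1 n).powersetCard (m + 1) | ∑ a ∈ A, a ≡ 1 [MOD p]} = N from hN.symm]
    at hlo hhi
  have hp1 : (1 : ℚ) ≤ p := by exact_mod_cast hp.one_lt.le
  have hmn : (m : ℚ) + 2 ≤ n := by exact_mod_cast hkn
  have hC : (0 : ℚ) ≤ n.choose (m + 2 - 1) := Nat.cast_nonneg _
  push_cast
  constructor
  · exact one_div_sub_mul_le_of_le_mul hp1 (by linarith) (by linarith) hC (by linarith)
  · exact le_one_div_add_mul_of_mul_le hp1 (by linarith) (by linarith) hC (by linarith)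
end

section
/- Let n ≥ 2 and let D = {A_1, …, A_{⌊n/2⌋}} be a family of ⌊n/2⌋ pairwise disjoint 2-element subsets of {1,…,n}. Then D is a dominating set of the 2-token graph F_2(K_n). -/
/-
Suppose a pair S is neither in D nor adjacent to a member of D. Two pairs that meet in exactly one
point are adjacent in F₂(Kₙ), so S is disjoint from every member of D. Then D ∪ {S} consists of
⌊n/2⌋ + 1 pairwise disjoint pairs, covering 2⌊n/2⌋ + 2 > n points of {1, …, n}.
-/

open Finset

section

variable {V : Type*} [DecidableEq V] {k : ℕ}

theorem tokenGraph_top_adj_of_card_sdiff_eq_one {A B : {A : Finset V // A.card = k}}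
    (h : #(A.1 \ B.1) = 1) : (tokenGraph ⊤ k).Adj A B := by
  have h' : #(B.1 \ A.1) = 1 := by rw [← card_sdiff_comm (A.2.trans B.2.symm), h]
  obtain ⟨a, ha⟩ := card_eq_one.mp h
  obtain ⟨b, hb⟩ := card_eq_one.mp h'
  have hab : a ≠ b := by
    have ha' : a ∉ B.1 := (mem_sdiff.mp (ha ▸ mem_singleton_self a)).2
    have hb' : b ∈ B.1 := (mem_sdiff.mp (hb ▸ mem_singleton_self b)).1
    exact fun hab => ha' (hab ▸ hb')
  refine ⟨a, b, hab, ?_⟩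
  rw [symmDiff_def, ha, hb]
  rfl

theorem Finset.eq_or_disjoint_or_card_sdiff_eq_one {A B : Finset V} (hA : #A = 2) (hB : #B = 2) :
    A = B ∨ Disjoint A B ∨ #(A \ B) = 1 := by
  have hsplit := card_sdiff_add_card_inter A B
  have hinter : #(A ∩ B) ≤ 2 := hA ▸ card_le_card inter_subset_left
  obtain h0 | h1 | h2 : #(A \ B) = 0 ∨ #(A \ B) = 1 ∨ #(A \ B) = 2 := by omega
  · have hsub : A ⊆ B := sdiff_eq_empty_iff_subset.mp (card_eq_zero.mp h0)
    exact Or.inl (eq_of_subset_of_card_le hsub (by omega))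
  · exact Or.inr (Or.inr h1)
  · have hself : A \ B = A := eq_of_subset_of_card_le sdiff_subset (by omega)
    exact Or.inr (Or.inl (sdiff_eq_self_iff_disjoint.mp hself))

theorem tokenGraph_top_two_eq_or_disjoint_or_adj (A B : {A : Finset V // A.card = 2}) :
    A = B ∨ Disjoint A.1 B.1 ∨ (tokenGraph ⊤ 2).Adj A B := by
  obtain h | h | h := eq_or_disjoint_or_card_sdiff_eq_one A.2 B.2
  · exact Or.inl (Subtype.ext h)
  · exact Or.inr (Or.inl h)
  · exact Or.inr (Or.inr (tokenGraph_top_adj_of_card_sdiff_eq_one h))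

theorem mul_card_le_card_of_pairwiseDisjoint [Fintype V] {D : Finset {A : Finset V // A.card = k}}
    (hD : (D : Set {A : Finset V // A.card = k}).PairwiseDisjoint Subtype.val) :
    k * #D ≤ Fintype.card V := by
  calc k * #D = #(D.biUnion Subtype.val) := by
        rw [card_biUnion hD, sum_congr rfl fun A _ => A.2, sum_const, smul_eq_mul, mul_comm]
    _ ≤ Fintype.card V := card_le_univ _

end

theorem disjoint_pairs_dominating_general (n : ℕ)
    (D : Finset {A : Finset (Fin n) // A.card = 2}) (hcard : D.card = n / 2)
    (hdisj : ∀ A ∈ D, ∀ B ∈ D, A ≠ B → Disjoint A.1 B.1) :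
    IsDominatingSet (tokenGraph (⊤ : SimpleGraph (Fin n)) 2) ↑D := by
  intro S
  by_contra! ⟨hS, hnadj⟩
  have hSdisj : ∀ A ∈ D, S ≠ A → Disjoint S.1 A.1 := fun A hA _ => by
    obtain h | h | h := tokenGraph_top_two_eq_or_disjoint_or_adj S A
    · exact absurd (h ▸ hA) hS
    · exact h
    · exact absurd h.symm (hnadj A hA)
  have hcover := mul_card_le_card_of_pairwiseDisjoint (D := insert S D)
    (by simpa only [coe_insert] using Set.PairwiseDisjoint.insert hdisj hSdisj)
  rw [card_insert_of_notMem hS, hcard, Fintype.card_fin] at hcover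
  omega

/-- A family of `⌊n/2⌋` pairwise disjoint 2-element subsets of `{1, …, n}` is a
dominating set of the 2-token graph `F₂(Kₙ)`. -/
theorem disjoint_pairs_dominating (n : ℕ) (hn : 2 ≤ n)
    (D : Finset {A : Finset (Fin n) // A.card = 2}) (hcard : D.card = n / 2)
    (hdisj : ∀ A ∈ D, ∀ B ∈ D, A ≠ B → Disjoint A.1 B.1) :
    IsDominatingSet (tokenGraph (⊤ : SimpleGraph (Fin n)) 2) ↑D :=
  disjoint_pairs_dominating_general n D hcard hdisj
end

section
/- Let n ≥ 2 and let X be a set of 2-element subsets of {1,…,n} with |X| < ⌊n/2⌋. Then there exists a 2-element subset B of {1,…,n} with B ∩ A = ∅ for every A ∈ X; consequently X is not a dominating set of the 2-token graph F_2(K_n). -/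
/-! The members of `X` cover at most `2|X| ≤ n - 2` points, so two uncovered points form a vertex
`B` of `F₂(Kₙ)` disjoint from every member of `X`. A 2-set disjoint from `B` differs from it in
four points, so it is neither `B` nor a neighbour of `B`, and `B` is not dominated. -/

theorem Finset.exists_card_eq_forall_disjoint {α ι : Type*} [Fintype α] [DecidableEq α]
    (s : Finset ι) (f : ι → Finset α) {m : ℕ} (h : (s.biUnion f).card + m ≤ Fintype.card α) :
    ∃ B : Finset α, B.card = m ∧ ∀ i ∈ s, Disjoint B (f i) := by
  have hm : m ≤ (s.biUnion f)ᶜ.card := by rw [card_compl]; omega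
  obtain ⟨B, hB, hBcard⟩ := exists_subset_card_eq hm
  refine ⟨B, hBcard, fun i hi => ?_⟩
  exact disjoint_left.2 fun x hxB hxf => mem_compl.1 (hB hxB) (mem_biUnion.2 ⟨i, hi, hxf⟩)

section TokenGraph

variable {V : Type*} [DecidableEq V] {G : SimpleGraph V} {k : ℕ}

theorem tokenGraph_adj_card_symmDiff {A B : {A : Finset V // A.card = k}}
    (h : (tokenGraph G k).Adj A B) : (symmDiff A.1 B.1).card = 2 := by
  obtain ⟨u, v, huv, hAB⟩ := h
  rw [hAB, Finset.card_pair huv.ne]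

theorem not_tokenGraph_adj_of_disjoint (hk : 2 ≤ k) {A B : {A : Finset V // A.card = k}}
    (hAB : Disjoint A.1 B.1) : ¬ (tokenGraph G k).Adj A B := by
  intro h
  have hcard := tokenGraph_adj_card_symmDiff h
  rw [hAB.symmDiff_eq_sup, Finset.sup_eq_union, Finset.card_union_of_disjoint hAB, A.2, B.2]
    at hcard
  omega

theorem not_isDominatingSet_tokenGraph_of_forall_disjoint (hk : 2 ≤ k)
    {D : Set {A : Finset V // A.card = k}} (B : {A : Finset V // A.card = k})
    (hB : ∀ A ∈ D, Disjoint B.1 A.1) : ¬ IsDominatingSet (tokenGraph G k) D := by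
  intro hD
  rcases hD B with hBD | ⟨A, hA, hAB⟩
  · have hempty : B.1 = ∅ := Finset.disjoint_self_iff_empty _ |>.1 (hB B hBD)
    have := B.2
    rw [hempty, Finset.card_empty] at this
    omega
  · exact not_tokenGraph_adj_of_disjoint hk (hB A hA).symm hAB

end TokenGraph

theorem small_set_not_dominating_complete_general (n : ℕ)
    (X : Finset {A : Finset (Fin n) // A.card = 2}) (hX : X.card < n / 2) :
    (∃ B : {A : Finset (Fin n) // A.card = 2}, ∀ A ∈ X, B.1 ∩ A.1 = ∅) ∧
    ¬ IsDominatingSet (tokenGraph (⊤ : SimpleGraph (Fin n)) 2) ↑X := by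
  have hcover : (X.biUnion (·.1)).card ≤ X.card * 2 :=
    Finset.card_biUnion_le_card_mul X _ 2 fun A _ => A.2.le
  obtain ⟨B, hBcard, hB⟩ := Finset.exists_card_eq_forall_disjoint X (·.1) (m := 2)
    (by rw [Fintype.card_fin]; omega)
  refine ⟨⟨⟨B, hBcard⟩, fun A hA => Finset.disjoint_iff_inter_eq_empty.1 (hB A hA)⟩, ?_⟩
  exact not_isDominatingSet_tokenGraph_of_forall_disjoint le_rfl ⟨B, hBcard⟩ hB

/-- If `X` is a set of fewer than `⌊n/2⌋` vertices of `F₂(Kₙ)`, then some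
2-element subset `B` of `{1, …, n}` is disjoint from every member of `X`;
consequently `X` is not a dominating set of `F₂(Kₙ)`. -/
theorem small_set_not_dominating_complete (n : ℕ) (hn : 2 ≤ n)
    (X : Finset {A : Finset (Fin n) // A.card = 2}) (hX : X.card < n / 2) :
    (∃ B : {A : Finset (Fin n) // A.card = 2}, ∀ A ∈ X, B.1 ∩ A.1 = ∅) ∧
    ¬ IsDominatingSet (tokenGraph (⊤ : SimpleGraph (Fin n)) 2) ↑X :=
  small_set_not_dominating_complete_general n X hX
end

section
/- Let n ≥ 3 and let D be a dominating set of the 3-token graph F_3(K_n). Let H be the simple graph on vertex set {1,…,n} whose edges are exactly the 2-element subsets of {1,…,n} that are not contained in any element of D. Then H is triangle-free. -/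
/-!
A triangle `t` of the uncovered-pairs graph is itself a vertex of `F₃(Kₙ)`. Whether `t ∈ D` or
`t` is adjacent to some `B ∈ D`, the member of `D` in question shares at least two vertices
with `t`, hence contains an edge of the triangle, which is therefore covered.
-/

theorem tokenGraph_adj_card_inter_add_one {V : Type*} [DecidableEq V] {G : SimpleGraph V}
    {k : ℕ} {A B : {A : Finset V // A.card = k}} (h : (tokenGraph G k).Adj A B) :
    (A.1 ∩ B.1).card + 1 = k := by
  obtain ⟨u, v, huv, hsd⟩ := h
  have hsd_card : (A.1 \ B.1).card + (B.1 \ A.1).card = 2 := by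
    rw [← Finset.card_union_of_disjoint disjoint_sdiff_sdiff, ← Finset.sup_eq_union,
      ← symmDiff_def, hsd, Finset.card_pair huv.ne]
  have hA := Finset.card_sdiff_add_card_inter A.1 B.1
  have hB := Finset.card_sdiff_add_card_inter B.1 A.1
  rw [A.2] at hA
  rw [Finset.inter_comm, B.2] at hB
  omega

theorem IsDominatingSet.exists_mem_le_card_inter_add_one {V : Type*} [DecidableEq V]
    {G : SimpleGraph V} {k : ℕ} {D : Set {A : Finset V // A.card = k}}
    (hD : IsDominatingSet (tokenGraph G k) D) (A : {A : Finset V // A.card = k}) :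
    ∃ B ∈ D, k ≤ (A.1 ∩ B.1).card + 1 := by
  rcases hD A with hA | ⟨B, hB, hBA⟩
  · exact ⟨A, hA, by rw [Finset.inter_self, A.2]; omega⟩
  · exact ⟨B, hB, by rw [Finset.inter_comm, tokenGraph_adj_card_inter_add_one hBA]⟩

theorem card_inter_le_one_of_isClique_uncovered {V ι : Type*} [DecidableEq V] {D : Set ι}
    {F : ι → Finset V} {t : Finset V}
    (ht : (SimpleGraph.fromRel fun u v : V => ∀ A ∈ D, ¬ ({u, v} : Finset V) ⊆ F A).IsClique
      (t : Set V))
    {A : ι} (hA : A ∈ D) : (t ∩ F A).card ≤ 1 := by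
  refine Finset.card_le_one.mpr fun a ha b hb => by_contra fun hab => ?_
  rw [Finset.mem_inter] at ha hb
  obtain ⟨-, h | h⟩ := ht ha.1 hb.1 hab
  · exact h A hA (Finset.insert_subset ha.2 (Finset.singleton_subset_iff.mpr hb.2))
  · exact h A hA (Finset.insert_subset hb.2 (Finset.singleton_subset_iff.mpr ha.2))

theorem uncovered_pairs_triangle_free_general (n : ℕ)
    (D : Set {A : Finset (Fin n) // A.card = 3})
    (hD : IsDominatingSet (tokenGraph (⊤ : SimpleGraph (Fin n)) 3) D) :
    (SimpleGraph.fromRel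
      (fun u v : Fin n => ∀ A ∈ D, ¬ ({u, v} : Finset (Fin n)) ⊆ A.1)).CliqueFree 3 := by
  intro t ht
  obtain ⟨B, hB, hcard : 3 ≤ (t ∩ B.1).card + 1⟩ :=
    hD.exists_mem_le_card_inter_add_one ⟨t, ht.card_eq⟩
  have hsmall := card_inter_le_one_of_isClique_uncovered (F := Subtype.val) ht.isClique hB
  omega

/-- If `D` is a dominating set of `F₃(Kₙ)`, then the graph `H` on `{1, …, n}`
whose edges are the 2-element subsets not contained in any member of `D` is
triangle-free. -/
theorem uncovered_pairs_triangle_free (n : ℕ) (hn : 3 ≤ n)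
    (D : Set {A : Finset (Fin n) // A.card = 3})
    (hD : IsDominatingSet (tokenGraph (⊤ : SimpleGraph (Fin n)) 3) D) :
    (SimpleGraph.fromRel
      (fun u v : Fin n => ∀ A ∈ D, ¬ ({u, v} : Finset (Fin n)) ⊆ A.1)).CliqueFree 3 :=
  uncovered_pairs_triangle_free_general n D hD
end

section
/- Let n ≥ 3 and let D be a dominating set of the 3-token graph F_3(K_n). Then 3·|D| + ⌊n²/4⌋ ≥ C(n,2), where C(n,2) denotes the binomial coefficient n choose 2. -/
/-!
A pair of vertices is covered if some member of `D` contains both. Every 3-set `B` contains a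
covered pair: either `B ∈ D`, or `B` is adjacent in `F₃(Kₙ)` to some `A ∈ D`, and then
`|A ∩ B| = 2`. Hence the uncovered pairs form a triangle-free graph, which has at most `⌊n²/4⌋`
edges by Mantel's theorem, while each member of `D` covers only three pairs.
-/

open Finset

namespace SimpleGraph

variable {V : Type*}

theorem CliqueFree.card_edgeFinset_le_sq_div_four [Fintype V] {G : SimpleGraph V}
    [DecidableRel G.Adj] (h : G.CliqueFree 3) : #G.edgeFinset ≤ Fintype.card V ^ 2 / 4 := by
  have hmod : (Fintype.card V % 2).choose 2 = 0 :=
    Nat.choose_eq_zero_of_lt (Nat.mod_lt _ two_pos)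
  have := h.card_edgeFinset_le (r := 2)
  simp only [hmod, add_zero, Nat.add_one_sub_one, mul_one] at this
  exact this.trans (Nat.div_le_div_right (Nat.sub_le _ _))

def cliqueUnion (𝒜 : Finset (Finset V)) : SimpleGraph V where
  Adj u v := u ≠ v ∧ ∃ A ∈ 𝒜, u ∈ A ∧ v ∈ A
  symm := ⟨fun _ _ ⟨hne, A, hA, hu, hv⟩ => ⟨hne.symm, A, hA, hv, hu⟩⟩
  loopless := ⟨fun _ h => h.1 rfl⟩

@[simp]
theorem cliqueUnion_adj {𝒜 : Finset (Finset V)} {u v : V} :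
    (cliqueUnion 𝒜).Adj u v ↔ u ≠ v ∧ ∃ A ∈ 𝒜, u ∈ A ∧ v ∈ A :=
  Iff.rfl

variable [DecidableEq V]

instance (𝒜 : Finset (Finset V)) : DecidableRel (cliqueUnion 𝒜).Adj :=
  fun u v => inferInstanceAs (Decidable (u ≠ v ∧ ∃ A ∈ 𝒜, u ∈ A ∧ v ∈ A))

theorem cliqueFree_three_compl_cliqueUnion {𝒜 : Finset (Finset V)}
    (h : ∀ B : Finset V, #B = 3 → ∃ A ∈ 𝒜, 2 ≤ #(A ∩ B)) : (cliqueUnion 𝒜)ᶜ.CliqueFree 3 := by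
  intro t ht
  obtain ⟨A, hA, hAt⟩ := h t ht.card_eq
  obtain ⟨u, hu, v, hv, hne⟩ := one_lt_card.1 hAt
  rw [mem_inter] at hu hv
  exact (ht.isClique hu.2 hv.2 hne).2 (cliqueUnion_adj.2 ⟨hne, A, hA, hu.1, hv.1⟩)

variable [Fintype V]

theorem card_edgeFinset_cliqueUnion_le (𝒜 : Finset (Finset V)) :
    #(cliqueUnion 𝒜).edgeFinset ≤ ∑ A ∈ 𝒜, (#A).choose 2 := by
  have hsub :
      (cliqueUnion 𝒜).edgeFinset ⊆ 𝒜.biUnion (fun A => A.offDiag.image Sym2.mk.uncurry) := by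
    rintro ⟨u, v⟩ he
    obtain ⟨hne, A, hA, hu, hv⟩ := cliqueUnion_adj.1 (mem_edgeFinset.1 he)
    exact mem_biUnion.2 ⟨A, hA, mem_image.2 ⟨(u, v), mem_offDiag.2 ⟨hu, hv, hne⟩, rfl⟩⟩
  calc #(cliqueUnion 𝒜).edgeFinset ≤ ∑ A ∈ 𝒜, #(A.offDiag.image Sym2.mk.uncurry) :=
        (card_le_card hsub).trans card_biUnion_le
    _ = ∑ A ∈ 𝒜, (#A).choose 2 := by simp only [Sym2.card_image_offDiag]

theorem choose_two_le_card_edgeFinset_add_card_edgeFinset_compl (G : SimpleGraph V)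
    [DecidableRel G.Adj] :
    (Fintype.card V).choose 2 ≤ #G.edgeFinset + #Gᶜ.edgeFinset := by
  calc (Fintype.card V).choose 2 = #(⊤ : SimpleGraph V).edgeFinset :=
        card_edgeFinset_top_eq_card_choose_two.symm
    _ ≤ #(G ⊔ Gᶜ).edgeFinset := card_le_card (edgeFinset_mono (sup_compl_eq_top (x := G)).ge)
    _ ≤ #G.edgeFinset + #Gᶜ.edgeFinset := by rw [edgeFinset_sup]; exact card_union_le _ _

end SimpleGraph

open SimpleGraph

theorem tokenGraph.card_inter_add_one {V : Type*} [DecidableEq V] {G : SimpleGraph V} {k : ℕ}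
    {A B : {A : Finset V // #A = k}} (h : (tokenGraph G k).Adj A B) : #(A.1 ∩ B.1) + 1 = k := by
  obtain ⟨u, v, huv, hAB⟩ := h
  have hsymm : #(A.1 \ B.1) + #(B.1 \ A.1) = 2 := by
    rw [← card_union_of_disjoint disjoint_sdiff_sdiff, ← sup_eq_union, ← symmDiff_def, hAB,
      card_pair huv.ne]
  have hA := card_sdiff_add_card_inter A.1 B.1
  have hB := card_sdiff_add_card_inter B.1 A.1
  rw [A.2] at hA
  rw [inter_comm, B.2] at hB
  omega

theorem IsDominatingSet.exists_le_card_inter_add_one {V : Type*} [DecidableEq V]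
    {G : SimpleGraph V} {k : ℕ} {D : Set {A : Finset V // #A = k}}
    (hD : IsDominatingSet (tokenGraph G k) D) (B : {A : Finset V // #A = k}) :
    ∃ A ∈ D, k ≤ #(A.1 ∩ B.1) + 1 := by
  rcases hD B with hB | ⟨A, hA, hAB⟩
  · exact ⟨B, hB, by rw [inter_self, B.2]; omega⟩
  · exact ⟨A, hA, (tokenGraph.card_inter_add_one hAB).ge⟩

theorem dominating_set_three_token_bound_general (n : ℕ)
    (D : Finset {A : Finset (Fin n) // A.card = 3})
    (hD : IsDominatingSet (tokenGraph (⊤ : SimpleGraph (Fin n)) 3) ↑D) :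
    n.choose 2 ≤ 3 * D.card + n ^ 2 / 4 := by
  set 𝒜 := D.map (.subtype _)
  have hmeets : ∀ B : Finset (Fin n), #B = 3 → ∃ A ∈ 𝒜, 2 ≤ #(A ∩ B) := fun B hB => by
    obtain ⟨A, hA, hAB⟩ := hD.exists_le_card_inter_add_one ⟨B, hB⟩
    exact ⟨A.1, mem_map_of_mem _ hA, by simpa using hAB⟩
  have hcovered : ∑ A ∈ 𝒜, (#A).choose 2 = 3 * #D := by
    have hA : ∀ A : {A : Finset (Fin n) // #A = 3}, (#A.1).choose 2 = 3 := fun A => by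
      rw [A.2]; rfl
    simp [𝒜, sum_map, hA, mul_comm]
  calc n.choose 2 ≤ #(cliqueUnion 𝒜).edgeFinset + #(cliqueUnion 𝒜)ᶜ.edgeFinset := by
        simpa using choose_two_le_card_edgeFinset_add_card_edgeFinset_compl (cliqueUnion 𝒜)
    _ ≤ 3 * #D + n ^ 2 / 4 := by
      gcongr
      · exact hcovered ▸ card_edgeFinset_cliqueUnion_le 𝒜
      · simpa using (cliqueFree_three_compl_cliqueUnion hmeets).card_edgeFinset_le_sq_div_four

/-- If `D` is a dominating set of `F₃(Kₙ)`, then `3·|D| + ⌊n²/4⌋ ≥ C(n, 2)`. -/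
theorem dominating_set_three_token_bound (n : ℕ) (hn : 3 ≤ n)
    (D : Finset {A : Finset (Fin n) // A.card = 3})
    (hD : IsDominatingSet (tokenGraph (⊤ : SimpleGraph (Fin n)) 3) ↑D) :
    n.choose 2 ≤ 3 * D.card + n ^ 2 / 4 :=
  dominating_set_three_token_bound_general n D hD
end

section
/- Let n and k be integers with 1 ≤ k ≤ n, and let A be a vertex of the k-token graph F_k(S_n), i.e., a k-element subset of {0,1,…,n}. If 0 ∈ A, then the degree of A in F_k(S_n) is n − k + 1; if 0 ∉ A, then the degree of A in F_k(S_n) is k. Consequently, if moreover 2k ≤ n + 1, the maximum degree of F_k(S_n) is n − k + 1. -/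
attribute [local instance] Classical.propDecidable

namespace Finset

variable {α : Type*} [DecidableEq α] {s t : Finset α} {u v : α}

theorem card_insert_erase_of_mem_of_notMem (hu : u ∈ s) (hv : v ∉ s) :
    #(insert v (s.erase u)) = #s := by
  rw [card_insert_of_notMem (fun h => hv (mem_of_mem_erase h)), card_erase_add_one hu]

theorem sdiff_insert_erase_of_mem_of_notMem (hu : u ∈ s) (hv : v ∉ s) :
    s \ insert v (s.erase u) = {u} := by
  ext w; simp only [mem_sdiff, mem_insert, mem_erase, mem_singleton]; grind

theorem insert_erase_sdiff_of_notMem (hv : v ∉ s) :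
    insert v (s.erase u) \ s = {v} := by
  ext w; simp only [mem_sdiff, mem_insert, mem_erase, mem_singleton]; grind

theorem eq_insert_erase_of_sdiff_eq_singleton (hu : s \ t = {u}) (hv : t \ s = {v}) :
    t = insert v (s.erase u) := by
  ext w
  have hu' := Finset.ext_iff.1 hu w
  have hv' := Finset.ext_iff.1 hv w
  simp only [mem_sdiff, mem_singleton] at hu' hv'
  simp only [mem_insert, mem_erase]
  grind

theorem exists_sdiff_eq_singleton_of_card_symmDiff_eq_two (hst : #s = #t)
    (h : #(symmDiff s t) = 2) : ∃ u v, s \ t = {u} ∧ t \ s = {v} := by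
  rw [symmDiff_def, sup_eq_union, card_union_of_disjoint disjoint_sdiff_sdiff,
    ← card_sdiff_comm hst] at h
  obtain ⟨u, hu⟩ := card_eq_one.1 (show #(s \ t) = 1 by omega)
  obtain ⟨v, hv⟩ := card_eq_one.1 (show #(t \ s) = 1 by rw [← card_sdiff_comm hst]; omega)
  exact ⟨u, v, hu, hv⟩

end Finset

open Finset

namespace SimpleGraph

variable {V : Type*} [DecidableEq V] {G : SimpleGraph V} {k : ℕ}

def boundaryDarts [Fintype V] (G : SimpleGraph V) [DecidableRel G.Adj] (s : Finset V) :
    Finset (V × V) :=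
  {p ∈ s ×ˢ sᶜ | G.Adj p.1 p.2}

theorem mem_boundaryDarts [Fintype V] [DecidableRel G.Adj] {s : Finset V} {p : V × V} :
    p ∈ G.boundaryDarts s ↔ p.1 ∈ s ∧ p.2 ∉ s ∧ G.Adj p.1 p.2 := by
  simp only [boundaryDarts, mem_filter, mem_product, mem_compl, and_assoc]

theorem tokenGraph_adj_iff {A B : {A : Finset V // #A = k}} :
    (tokenGraph G k).Adj A B ↔
      ∃ u ∈ A.1, ∃ v ∉ A.1, G.Adj u v ∧ B.1 = insert v (A.1.erase u) := by
  constructor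
  · rintro ⟨x, y, hxy, hAB⟩
    obtain ⟨u, v, hu, hv⟩ := exists_sdiff_eq_singleton_of_card_symmDiff_eq_two
      (A.2.trans B.2.symm) (by rw [hAB, card_pair hxy.ne])
    have huv : ({u, v} : Finset V) = {x, y} := by
      rw [← hAB, symmDiff_def, sup_eq_union, hu, hv]; rfl
    have hu' : u ∈ A.1 \ B.1 := hu ▸ mem_singleton_self u
    have hv' : v ∈ B.1 \ A.1 := hv ▸ mem_singleton_self v
    refine ⟨u, (mem_sdiff.1 hu').1, v, (mem_sdiff.1 hv').2, ?_,
      eq_insert_erase_of_sdiff_eq_singleton hu hv⟩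
    have hne : u ≠ v := fun h => (mem_sdiff.1 hv').2 (h ▸ (mem_sdiff.1 hu').1)
    have hux : u ∈ ({x, y} : Finset V) := huv ▸ mem_insert_self u {v}
    have hvx : v ∈ ({x, y} : Finset V) := huv ▸ mem_insert_of_mem (mem_singleton_self v)
    rw [mem_insert, mem_singleton] at hux hvx
    rcases hux with rfl | rfl <;> rcases hvx with rfl | rfl
    exacts [absurd rfl hne, hxy, hxy.symm, absurd rfl hne]
  · rintro ⟨u, hu, v, hv, huv, hB⟩
    refine ⟨u, v, huv, ?_⟩
    rw [hB, symmDiff_def, sup_eq_union, sdiff_insert_erase_of_mem_of_notMem hu hv,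
      insert_erase_sdiff_of_notMem hv]
    rfl

theorem tokenGraph_degree_eq_card_boundaryDarts [Fintype V] [DecidableRel G.Adj]
    (A : {A : Finset V // #A = k}) [Fintype ((tokenGraph G k).neighborSet A)] :
    (tokenGraph G k).degree A = #(G.boundaryDarts A.1) := by
  rw [← card_neighborFinset_eq_degree]
  symm
  refine card_bij (fun p hp => ⟨insert p.2 (A.1.erase p.1),
    (card_insert_erase_of_mem_of_notMem (mem_boundaryDarts.1 hp).1
      (mem_boundaryDarts.1 hp).2.1).trans A.2⟩) ?_ ?_ ?_
  · intro p hp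
    obtain ⟨hu, hv, huv⟩ := mem_boundaryDarts.1 hp
    exact (mem_neighborFinset _ _ _).2 (tokenGraph_adj_iff.2 ⟨_, hu, _, hv, huv, rfl⟩)
  · intro p hp q hq hpq
    obtain ⟨hpu, hpv, -⟩ := mem_boundaryDarts.1 hp
    obtain ⟨hqu, hqv, -⟩ := mem_boundaryDarts.1 hq
    have h := congrArg Subtype.val hpq
    have hu := congrArg (A.1 \ ·) h
    have hv := congrArg (· \ A.1) h
    simp only [sdiff_insert_erase_of_mem_of_notMem hpu hpv,
      sdiff_insert_erase_of_mem_of_notMem hqu hqv, insert_erase_sdiff_of_notMem hpv,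
      insert_erase_sdiff_of_notMem hqv, singleton_inj] at hu hv
    exact Prod.ext hu hv
  · intro B hB
    obtain ⟨u, hu, v, hv, huv, hB⟩ := tokenGraph_adj_iff.1 ((mem_neighborFinset _ _ _).1 hB)
    exact ⟨(u, v), mem_boundaryDarts.2 ⟨hu, hv, huv⟩, Subtype.ext hB.symm⟩

end SimpleGraph

section Star

variable {n k : ℕ}

theorem starGraph_adj {u v : Fin (n + 1)} :
    (starGraph n).Adj u v ↔ u ≠ v ∧ (u = 0 ∨ v = 0) :=
  Iff.rfl

theorem starGraph_boundaryDarts_of_zero_mem {A : Finset (Fin (n + 1))} (h : 0 ∈ A) :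
    (starGraph n).boundaryDarts A = {0} ×ˢ Aᶜ := by
  ext ⟨u, v⟩
  simp only [SimpleGraph.mem_boundaryDarts, starGraph_adj, mem_product, mem_compl, mem_singleton]
  grind

theorem starGraph_boundaryDarts_of_zero_notMem {A : Finset (Fin (n + 1))} (h : 0 ∉ A) :
    (starGraph n).boundaryDarts A = A ×ˢ {0} := by
  ext ⟨u, v⟩
  simp only [SimpleGraph.mem_boundaryDarts, starGraph_adj, mem_product, mem_singleton]
  grind

variable (A : {A : Finset (Fin (n + 1)) // #A = k})
  [Fintype ((tokenGraph (starGraph n) k).neighborSet A)]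

theorem tokenGraph_starGraph_degree_of_zero_mem (h : 0 ∈ A.1) :
    (tokenGraph (starGraph n) k).degree A = n + 1 - k := by
  rw [SimpleGraph.tokenGraph_degree_eq_card_boundaryDarts, starGraph_boundaryDarts_of_zero_mem h,
    card_product, card_singleton, one_mul, card_compl, Fintype.card_fin, A.2]

theorem tokenGraph_starGraph_degree_of_zero_notMem (h : 0 ∉ A.1) :
    (tokenGraph (starGraph n) k).degree A = k := by
  rw [SimpleGraph.tokenGraph_degree_eq_card_boundaryDarts,
    starGraph_boundaryDarts_of_zero_notMem h, card_product, card_singleton, A.2, mul_one]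

end Star

theorem tokenGraph_starGraph_maxDegree {n k : ℕ} (hk : 1 ≤ k) (h2k : 2 * k ≤ n + 1) :
    (tokenGraph (starGraph n) k).maxDegree = n + 1 - k := by
  refine le_antisymm (SimpleGraph.maxDegree_le_of_forall_degree_le _ _ fun B => ?_) ?_
  · by_cases h : 0 ∈ B.1
    · rw [tokenGraph_starGraph_degree_of_zero_mem B h]
    · rw [tokenGraph_starGraph_degree_of_zero_notMem B h]
      omega
  · obtain ⟨A, h0, -, hA⟩ :=
      exists_subsuperset_card_eq (n := k) (subset_univ {(0 : Fin (n + 1))})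
      (by rwa [card_singleton]) (by rw [card_univ, Fintype.card_fin]; omega)
    rw [← tokenGraph_starGraph_degree_of_zero_mem ⟨A, hA⟩ (h0 (mem_singleton_self 0))]
    exact SimpleGraph.degree_le_maxDegree _ _

/-- In `F_k(Sₙ)`: a vertex containing the center `0` has degree `n - k + 1`, a
vertex not containing `0` has degree `k`; and if moreover `2k ≤ n + 1`, the
maximum degree of `F_k(Sₙ)` is `n - k + 1`. -/
theorem degrees_token_star (n k : ℕ) (hk : 1 ≤ k) (hkn : k ≤ n)
    (A : {A : Finset (Fin (n + 1)) // A.card = k}) :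
    ((0 : Fin (n + 1)) ∈ A.1 → (tokenGraph (starGraph n) k).degree A = n - k + 1) ∧
    ((0 : Fin (n + 1)) ∉ A.1 → (tokenGraph (starGraph n) k).degree A = k) ∧
    (2 * k ≤ n + 1 → (tokenGraph (starGraph n) k).maxDegree = n - k + 1) := by
  -- `n + 1 - k` is the count; it agrees with the stated `n - k + 1` only because `k ≤ n`
  have hsub : n + 1 - k = n - k + 1 := by omega
  exact ⟨fun h => hsub ▸ tokenGraph_starGraph_degree_of_zero_mem A h,
    tokenGraph_starGraph_degree_of_zero_notMem A,
    fun h2k => hsub ▸ tokenGraph_starGraph_maxDegree hk h2k⟩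
end
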